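/- arXiv:1201.4818 — 6 statements merged into one kernel-verified Lean document; each statement's English description precedes it below -/
import Mathlib

section
/- The point P = ((k-1)^{-1/2}, 0) satisfies F₄⁴(P) = P, and F₄^j(P) ≠ P for j = 1, 2, 3; in fact F₄^j(P) = R₄^j(P) for j = 1, 2, 3. -/
/-! `F₄` commutes with the quarter turn `R₄`, so once `F₄ P = R₄ P` the whole orbit of `P` under
`F₄` is its orbit under `R₄`, which has exact period 4 away from the origin. On the horizontal
axis, `F₄ (a, 0) = (0, k a³ / (1 + a²))`, and this equals `R₄ (a, 0) = (0, a)` exactly when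
`a² (k - 1) = 1`. -/

noncomputable section

def szlenkMap (k : ℝ) (p : ℝ × ℝ) : ℝ × ℝ :=
  (-k * p.2 ^ 3 / (1 + p.1 ^ 2 + p.2 ^ 2), k * p.1 ^ 3 / (1 + p.1 ^ 2 + p.2 ^ 2))

def quarterTurn (p : ℝ × ℝ) : ℝ × ℝ := (-p.2, p.1)

end

theorem quarterTurn_iterate_two (p : ℝ × ℝ) : quarterTurn^[2] p = -p := by
  ext <;> simp [quarterTurn]

theorem quarterTurn_iterate_four : quarterTurn^[4] = id := by
  funext p
  rw [show 4 = 2 + 2 from rfl, Function.iterate_add_apply, quarterTurn_iterate_two,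
    quarterTurn_iterate_two, neg_neg, id]

theorem quarterTurn_iterate_ne_self {p : ℝ × ℝ} (hp : p ≠ 0) {j : ℕ}
    (hj : j = 1 ∨ j = 2 ∨ j = 3) : quarterTurn^[j] p ≠ p := by
  obtain ⟨x, y⟩ := p
  simp only [ne_eq, Prod.mk_eq_zero, not_and_or] at hp
  rcases hj with rfl | rfl | rfl <;>
    simp only [Function.iterate_succ, Function.iterate_zero, Function.comp_apply, id,
      quarterTurn, ne_eq, Prod.mk.injEq] <;>
    rcases hp with hx | hy <;> intro h <;> first | exact hx (by linarith) | exact hy (by linarith)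

theorem szlenkMap_commute_quarterTurn (k : ℝ) : Function.Commute (szlenkMap k) quarterTurn := by
  intro p
  simp only [szlenkMap, quarterTurn, Prod.mk.injEq]
  constructor <;> ring

theorem szlenkMap_eq_quarterTurn_of_sq_mul {k a : ℝ} (ha : a ^ 2 * (k - 1) = 1) :
    szlenkMap k (a, 0) = quarterTurn (a, 0) := by
  have hden : 1 + a ^ 2 + 0 ^ 2 ≠ 0 := by positivity
  simp only [szlenkMap, quarterTurn, Prod.mk.injEq]
  refine ⟨by simp, ?_⟩
  rw [div_eq_iff hden]
  linear_combination a * ha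

theorem inv_sqrt_sub_one_sq_mul {k : ℝ} (hk : 1 < k) : (1 / Real.sqrt (k - 1)) ^ 2 * (k - 1) = 1 := by
  have hk' : 0 < k - 1 := by linarith
  rw [div_pow, one_pow, Real.sq_sqrt hk'.le, one_div_mul_cancel hk'.ne']

theorem szlenk_period_four_orbit_general (k : ℝ) (hk1 : 1 < k)
    (F : ℝ × ℝ → ℝ × ℝ)
    (hF : ∀ p : ℝ × ℝ,
      F p = (-k * p.2 ^ 3 / (1 + p.1 ^ 2 + p.2 ^ 2),
              k * p.1 ^ 3 / (1 + p.1 ^ 2 + p.2 ^ 2)))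
    (R : ℝ × ℝ → ℝ × ℝ) (hR : ∀ p : ℝ × ℝ, R p = (-p.2, p.1))
    (P : ℝ × ℝ) (hP : P = (1 / Real.sqrt (k - 1), 0)) :
    F^[4] P = P ∧
    (∀ j : ℕ, j = 1 ∨ j = 2 ∨ j = 3 → F^[j] P = R^[j] P ∧ F^[j] P ≠ P) := by
  obtain rfl : F = szlenkMap k := funext hF
  obtain rfl : R = quarterTurn := funext hR
  have hP0 : P ≠ 0 := by
    rw [hP]
    exact fun h => by simpa [(Real.sqrt_pos.mpr (sub_pos.mpr hk1)).ne'] using congrArg Prod.fst h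
  have orbit (n : ℕ) : (szlenkMap k)^[n] P = quarterTurn^[n] P := by
    refine (szlenkMap_commute_quarterTurn k).iterate_eq_of_map_eq n ?_
    rw [hP]
    exact szlenkMap_eq_quarterTurn_of_sq_mul (inv_sqrt_sub_one_sq_mul hk1)
  refine ⟨by rw [orbit, quarterTurn_iterate_four, id], fun j hj => ⟨orbit j, ?_⟩⟩
  rw [orbit]
  exact quarterTurn_iterate_ne_self hP0 hj

/-- The point `P = ((k-1)^{-1/2}, 0)` is periodic of minimal period 4 for `F₄`,
with `F₄^j(P) = R₄^j(P) ≠ P` for `j = 1, 2, 3`. -/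
theorem szlenk_period_four_orbit (k : ℝ) (hk1 : 1 < k) (hk2 : k < 2 / Real.sqrt 3)
    (F : ℝ × ℝ → ℝ × ℝ)
    (hF : ∀ p : ℝ × ℝ,
      F p = (-k * p.2 ^ 3 / (1 + p.1 ^ 2 + p.2 ^ 2),
              k * p.1 ^ 3 / (1 + p.1 ^ 2 + p.2 ^ 2)))
    (R : ℝ × ℝ → ℝ × ℝ) (hR : ∀ p : ℝ × ℝ, R p = (-p.2, p.1))
    (P : ℝ × ℝ) (hP : P = (1 / Real.sqrt (k - 1), 0)) :
    F^[4] P = P ∧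
    (∀ j : ℕ, j = 1 ∨ j = 2 ∨ j = 3 → F^[j] P = R^[j] P ∧ F^[j] P ≠ P) :=
  szlenk_period_four_orbit_general k hk1 F hF R hR P hP
end

section
/- The map F₄ is injective on ℝ². -/
/-!
Up to the factor `k ≠ 0` and the swap `(u, v) ↦ (-v, u)`, `F₄` is the map `G v = (vᵢ³)ᵢ / (1 + ‖v‖²)`.
If `G p = G q`, then, writing `s_v = 1 + ‖v‖²`, `qᵢ³ = (s_q / s_p) pᵢ³` for every coordinate, so `q = c p` with `c³ = s_q / s_p`.
Substituting back gives `c³ (1 + ‖p‖²) = 1 + c² ‖p‖²`, which for `c > 0` forces `c = 1`.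
-/

open Finset

lemma eq_mul_of_pow_three_div_eq {a b c s t : ℝ} (hs : 0 < s) (ht : 0 < t)
    (hc : c ^ 3 = t / s) (h : a ^ 3 / s = b ^ 3 / t) : b = c * a := by
  refine (Odd.pow_inj (n := 3) ⟨1, rfl⟩).mp ?_
  rw [mul_pow, hc]
  field_simp at h ⊢
  linarith

lemma eq_one_of_pow_three_mul_one_add_eq {c r : ℝ} (hc : 0 < c) (hr : 0 ≤ r)
    (h : c ^ 3 * (1 + r) = 1 + c ^ 2 * r) : c = 1 := by
  have hfactor : (c - 1) * (c ^ 2 + c + 1 + r * c ^ 2) = 0 := by linear_combination h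
  have hpos : 0 < c ^ 2 + c + 1 + r * c ^ 2 := by positivity
  linarith [(mul_eq_zero.mp hfactor).resolve_right hpos.ne']

theorem eq_of_pow_three_div_one_add_sum_sq_eq {ι : Type*} [Fintype ι] {p q : ι → ℝ}
    (h : ∀ i, p i ^ 3 / (1 + ∑ j, p j ^ 2) = q i ^ 3 / (1 + ∑ j, q j ^ 2)) : p = q := by
  set r := ∑ j, p j ^ 2
  have hs : 0 < 1 + r := by positivity
  have ht : 0 < 1 + ∑ j, q j ^ 2 := by positivity
  obtain ⟨c, hc0, hc3⟩ : ∃ c > 0, c ^ 3 = (1 + ∑ j, q j ^ 2) / (1 + r) :=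
    ⟨_, by positivity, Real.rpow_inv_natCast_pow (by positivity) three_ne_zero⟩
  have hq : ∀ i, q i = c * p i := fun i => eq_mul_of_pow_three_div_eq hs ht hc3 (h i)
  have hsq : ∑ j, q j ^ 2 = c ^ 2 * r := by simp only [hq, mul_pow, r, mul_sum]
  have hc1 : c = 1 := by
    refine eq_one_of_pow_three_mul_one_add_eq (r := r) hc0 (by positivity) ?_
    rw [hc3, hsq, div_mul_cancel₀ _ hs.ne']
  funext i
  rw [hq i, hc1, one_mul]

theorem szlenk_injective_general (k : ℝ) (hk1 : 1 < k)
    (F : ℝ × ℝ → ℝ × ℝ)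
    (hF : ∀ p : ℝ × ℝ,
      F p = (-k * p.2 ^ 3 / (1 + p.1 ^ 2 + p.2 ^ 2),
              k * p.1 ^ 3 / (1 + p.1 ^ 2 + p.2 ^ 2))) :
    Function.Injective F := by
  intro p q h
  rw [hF p, hF q, Prod.mk.injEq] at h
  have hk : k ≠ 0 := (zero_lt_one.trans hk1).ne'
  have hcoord : ∀ i, ![p.1, p.2] i ^ 3 / (1 + ∑ j, ![p.1, p.2] j ^ 2)
      = ![q.1, q.2] i ^ 3 / (1 + ∑ j, ![q.1, q.2] j ^ 2) := by
    simp only [Fin.sum_univ_two, Fin.forall_fin_two, Matrix.cons_val_zero, Matrix.cons_val_one,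
      ← add_assoc]
    simp only [neg_mul, neg_div, neg_inj, mul_div_assoc, mul_right_inj' hk] at h
    exact ⟨h.2, h.1⟩
  have hpq := eq_of_pow_three_div_one_add_sum_sq_eq hcoord
  exact Prod.ext (congrFun hpq 0) (congrFun hpq 1)

/-- `F₄` is injective on `ℝ²`. -/
theorem szlenk_injective (k : ℝ) (hk1 : 1 < k) (hk2 : k < 2 / Real.sqrt 3)
    (F : ℝ × ℝ → ℝ × ℝ)
    (hF : ∀ p : ℝ × ℝ,
      F p = (-k * p.2 ^ 3 / (1 + p.1 ^ 2 + p.2 ^ 2),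
              k * p.1 ^ 3 / (1 + p.1 ^ 2 + p.2 ^ 2))) :
    Function.Injective F :=
  szlenk_injective_general k hk1 F hF
end

section
/- The map F₄ is surjective onto ℝ², and hence (being continuous and injective) is a homeomorphism of ℝ². -/
/-!
With `D = 1 + x² + y²`, the map `(x, y) ↦ (x³ / D, y³ / D)` sends `(s a, s b)` to `(a³, b³)`
exactly when `s³ = D = (a² + b²) s² + 1`, and this cubic has a unique positive root `s`; so the
map is a bijection. It is also proper, since its norm grows like `‖(x, y)‖ / 3`, hence a
homeomorphism. `F₄` is this map followed by the invertible linear map `(u, v) ↦ (-k v, k u)`.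
-/

open Filter

lemma pow_three_surjective : Function.Surjective fun c : ℝ => c ^ 3 := by
  have hneg : Tendsto (fun c : ℝ => -(-c) ^ 3) atBot atBot :=
    tendsto_neg_atTop_atBot.comp ((tendsto_pow_atTop three_ne_zero).comp tendsto_neg_atBot_atTop)
  refine Continuous.surjective (by fun_prop) (tendsto_pow_atTop three_ne_zero) ?_
  simpa [Odd.neg_pow (by decide : Odd 3)] using hneg

lemma exists_pos_pow_three_eq_mul_sq_add_one (A : ℝ) : ∃ s, 0 < s ∧ s ^ 3 = A * s ^ 2 + 1 := by
  have hcont : ContinuousOn (fun s : ℝ => s ^ 3 - A * s ^ 2 - 1) (Set.Icc 0 (|A| + 1)) := by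
    fun_prop
  have hzero :
      (0 : ℝ) ∈ Set.Icc (0 ^ 3 - A * 0 ^ 2 - 1) ((|A| + 1) ^ 3 - A * (|A| + 1) ^ 2 - 1) :=
    ⟨by norm_num, by nlinarith [le_abs_self A, abs_nonneg A]⟩
  obtain ⟨s, hs, hs0⟩ := intermediate_value_Icc (by positivity) hcont hzero
  refine ⟨s, lt_of_le_of_ne hs.1 ?_, by linarith⟩
  rintro rfl
  norm_num at hs0

lemma eq_of_pow_three_eq_mul_sq_add_one {A s t : ℝ} (hs : 0 < s) (ht : 0 < t)
    (hs3 : s ^ 3 = A * s ^ 2 + 1) (ht3 : t ^ 3 = A * t ^ 2 + 1) : s = t := by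
  -- both are zeros of `s ↦ s - A - 1 / s ^ 2`, which is strictly increasing on `(0, ∞)`
  by_contra hne
  rcases lt_or_gt_of_ne hne with h | h
  · nlinarith [mul_pos hs ht, mul_pos (mul_pos hs ht) (sub_pos.2 h)]
  · nlinarith [mul_pos hs ht, mul_pos (mul_pos hs ht) (sub_pos.2 h)]

noncomputable def cubeRatio (p : ℝ × ℝ) : ℝ × ℝ :=
  (p.1 ^ 3 / (1 + p.1 ^ 2 + p.2 ^ 2), p.2 ^ 3 / (1 + p.1 ^ 2 + p.2 ^ 2))

lemma cubeRatio_mul {s a b : ℝ} (hs : s ^ 3 = (a ^ 2 + b ^ 2) * s ^ 2 + 1) :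
    cubeRatio (s * a, s * b) = (a ^ 3, b ^ 3) := by
  have hD : 1 + (s * a) ^ 2 + (s * b) ^ 2 = s ^ 3 := by linear_combination -hs
  have hs0 : s ^ 3 ≠ 0 := by rw [hs]; positivity
  rw [cubeRatio, hD, mul_pow, mul_pow, mul_div_cancel_left₀ _ hs0, mul_div_cancel_left₀ _ hs0]

lemma exists_eq_mul_of_cubeRatio (p : ℝ × ℝ) : ∃ s a b : ℝ, 0 < s ∧
    s ^ 3 = (a ^ 2 + b ^ 2) * s ^ 2 + 1 ∧ p = (s * a, s * b) := by
  obtain ⟨x, y⟩ := p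
  obtain ⟨s, hs⟩ : ∃ s : ℝ, s ^ 3 = 1 + x ^ 2 + y ^ 2 := pow_three_surjective _
  have hs0 : 0 < s := (Odd.pow_pos_iff (by decide : Odd 3)).1 (by rw [hs]; positivity)
  refine ⟨s, x / s, y / s, hs0, ?_, ?_⟩
  · field_simp
    linear_combination hs
  · ext <;> field_simp

lemma cubeRatio_surjective : Function.Surjective cubeRatio := by
  intro q
  obtain ⟨a, ha⟩ := pow_three_surjective q.1
  obtain ⟨b, hb⟩ := pow_three_surjective q.2
  obtain ⟨s, -, hs⟩ := exists_pos_pow_three_eq_mul_sq_add_one (a ^ 2 + b ^ 2)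
  exact ⟨(s * a, s * b), by rw [cubeRatio_mul hs]; exact Prod.ext ha hb⟩

lemma cubeRatio_injective : Function.Injective cubeRatio := by
  intro p q hpq
  obtain ⟨s, a, b, hs, hs3, rfl⟩ := exists_eq_mul_of_cubeRatio p
  obtain ⟨t, c, d, ht, ht3, rfl⟩ := exists_eq_mul_of_cubeRatio q
  rw [cubeRatio_mul hs3, cubeRatio_mul ht3, Prod.mk.injEq] at hpq
  obtain rfl := (Odd.pow_inj (by decide)).1 hpq.1
  obtain rfl := (Odd.pow_inj (by decide)).1 hpq.2
  rw [eq_of_pow_three_eq_mul_sq_add_one hs ht hs3 ht3]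

lemma continuous_cubeRatio : Continuous cubeRatio := by
  unfold cubeRatio
  fun_prop (disch := exact fun _ => by positivity)

lemma norm_le_three_mul_norm_cubeRatio {p : ℝ × ℝ} (hp : 1 ≤ ‖p‖) : ‖p‖ ≤ 3 * ‖cubeRatio p‖ := by
  obtain ⟨x, y⟩ := p
  set m := ‖(x, y)‖
  have hxm : |x| ≤ m := norm_fst_le (x, y)
  have hym : |y| ≤ m := norm_snd_le (x, y)
  have hDpos : 0 < 1 + x ^ 2 + y ^ 2 := by positivity
  have hD : 1 + x ^ 2 + y ^ 2 ≤ 3 * m ^ 2 := by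
    nlinarith [sq_abs x, sq_abs y, abs_nonneg x, abs_nonneg y]
  have key : ∀ z : ℝ, |z| = m → m ≤ 3 * |z ^ 3 / (1 + x ^ 2 + y ^ 2)| := by
    intro z hz
    rw [abs_div, abs_pow, hz, abs_of_pos hDpos, mul_div_assoc', le_div_iff₀ hDpos]
    nlinarith
  rcases max_choice |x| |y| with h | h
  · calc m ≤ 3 * |x ^ 3 / (1 + x ^ 2 + y ^ 2)| := key x (by rw [← h]; rfl)
      _ ≤ 3 * ‖cubeRatio (x, y)‖ := by gcongr; exact norm_fst_le (cubeRatio (x, y))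
  · calc m ≤ 3 * |y ^ 3 / (1 + x ^ 2 + y ^ 2)| := key y (by rw [← h]; rfl)
      _ ≤ 3 * ‖cubeRatio (x, y)‖ := by gcongr; exact norm_snd_le (cubeRatio (x, y))

lemma tendsto_cubeRatio_cocompact : Tendsto cubeRatio (cocompact _) (cocompact _) :=
  tendsto_cocompact_cocompact_of_norm fun ε => ⟨max 1 (3 * ε), fun p hp => by
    have := norm_le_three_mul_norm_cubeRatio (lt_of_le_of_lt (le_max_left _ _) hp).le
    linarith [lt_of_le_of_lt (le_max_right _ _) hp]⟩

lemma isProperMap_cubeRatio : IsProperMap cubeRatio :=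
  isProperMap_iff_tendsto_cocompact.2 ⟨continuous_cubeRatio, tendsto_cubeRatio_cocompact⟩

lemma isHomeomorph_cubeRatio : IsHomeomorph cubeRatio :=
  isHomeomorph_iff_continuous_isClosedMap_bijective.2 ⟨continuous_cubeRatio,
    isProperMap_cubeRatio.isClosedMap, cubeRatio_injective, cubeRatio_surjective⟩

lemma isHomeomorph_rotate_mul {k : ℝ} (hk : k ≠ 0) :
    IsHomeomorph fun q : ℝ × ℝ => (-k * q.2, k * q.1) :=
  isHomeomorph_iff_exists_inverse.2 ⟨by fun_prop, fun q => (q.2 / k, -q.1 / k),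
    fun q => by ext <;> field_simp, fun q => by ext <;> field_simp, by fun_prop⟩

theorem szlenk_surjective_homeomorph_general (k : ℝ) (hk1 : 1 < k)
    (F : ℝ × ℝ → ℝ × ℝ)
    (hF : ∀ p : ℝ × ℝ,
      F p = (-k * p.2 ^ 3 / (1 + p.1 ^ 2 + p.2 ^ 2),
              k * p.1 ^ 3 / (1 + p.1 ^ 2 + p.2 ^ 2))) :
    Function.Surjective F ∧ ∃ e : ℝ × ℝ ≃ₜ ℝ × ℝ, ⇑e = F := by
  have hF_comp : F = (fun q : ℝ × ℝ => (-k * q.2, k * q.1)) ∘ cubeRatio := by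
    funext p
    simp only [hF, cubeRatio, Function.comp_apply, mul_div_assoc]
  have hF_homeo : IsHomeomorph F :=
    hF_comp ▸ (isHomeomorph_rotate_mul (zero_lt_one.trans hk1).ne').comp isHomeomorph_cubeRatio
  exact ⟨hF_homeo.surjective, isHomeomorph_iff_exists_homeomorph.1 hF_homeo⟩

/-- `F₄` is surjective, and is a homeomorphism of the plane. -/
theorem szlenk_surjective_homeomorph (k : ℝ) (hk1 : 1 < k)
    (hk2 : k < 2 / Real.sqrt 3)
    (F : ℝ × ℝ → ℝ × ℝ)
    (hF : ∀ p : ℝ × ℝ,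
      F p = (-k * p.2 ^ 3 / (1 + p.1 ^ 2 + p.2 ^ 2),
              k * p.1 ^ 3 / (1 + p.1 ^ 2 + p.2 ^ 2))) :
    Function.Surjective F ∧ ∃ e : ℝ × ℝ ≃ₜ ℝ × ℝ, ⇑e = F :=
  szlenk_surjective_homeomorph_general k hk1 F hF
end

section
/- F₄ maps the open first quadrant S₁ = {(x,y) : x > 0, y > 0} into the open second quadrant S₂ = {(x,y) : x < 0, y > 0}, and the image F₄(S₁) equals S₂. -/
/-!
Along the ray `y = c x` (`c > 0`) the two coordinates of `F₄` have ratio `-c³`, so the cube root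
of `-a / b` selects the ray through which `(a, b)` must be reached; along that ray the second
coordinate `k t³ / (1 + (1 + c²) t²)` runs continuously from `0` to `∞`, so it takes the value `b`.
-/

open Set

lemma exists_pos_mul_pow_three_eq {k b d : ℝ} (hk : 0 < k) (hb : 0 < b) :
    ∃ t : ℝ, 0 < t ∧ k * t ^ 3 = b * (1 + d * t ^ 2) := by
  set M : ℝ := max 1 ((b * d + b) / k)
  have hM1 : 1 ≤ M := le_max_left _ _
  have hkM : b * d + b ≤ k * M := by
    rw [← div_le_iff₀' hk]
    exact le_max_right _ _
  have hcont : ContinuousOn (fun t : ℝ => k * t ^ 3 - b * (1 + d * t ^ 2)) (Icc 0 M) := by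
    fun_prop
  have hsign : (0 : ℝ) ∈ Icc (k * 0 ^ 3 - b * (1 + d * 0 ^ 2)) (k * M ^ 3 - b * (1 + d * M ^ 2)) := by
    have hM2 : 1 ≤ M ^ 2 := one_le_pow₀ hM1
    constructor
    · simp [hb.le]
    · nlinarith [mul_le_mul_of_nonneg_right hkM (sq_nonneg M)]
  obtain ⟨t, ht, hroot⟩ := intermediate_value_Icc (by linarith) hcont hsign
  have ht0 : t ≠ 0 := by
    rintro rfl
    norm_num at hroot
    exact hb.ne' hroot
  exact ⟨t, lt_of_le_of_ne ht.1 (Ne.symm ht0), by linarith⟩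

lemma exists_first_quadrant_preimage {k a b : ℝ} (hk : 0 < k) (ha : a < 0) (hb : 0 < b) :
    ∃ x y : ℝ, 0 < x ∧ 0 < y ∧
      -k * y ^ 3 / (1 + x ^ 2 + y ^ 2) = a ∧ k * x ^ 3 / (1 + x ^ 2 + y ^ 2) = b := by
  have hab : 0 < -a / b := div_pos (neg_pos.mpr ha) hb
  set c : ℝ := (-a / b) ^ ((3 : ℕ)⁻¹ : ℝ)
  have hc : 0 < c := Real.rpow_pos_of_pos hab _
  have hc3 : c ^ 3 = -a / b := Real.rpow_inv_natCast_pow hab.le three_ne_zero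
  obtain ⟨t, ht, hroot⟩ := exists_pos_mul_pow_three_eq (d := 1 + c ^ 2) hk hb
  have hden : 1 + t ^ 2 + (c * t) ^ 2 = 1 + (1 + c ^ 2) * t ^ 2 := by ring
  have hsecond : k * t ^ 3 / (1 + t ^ 2 + (c * t) ^ 2) = b := by
    rw [hden, hroot, mul_div_assoc, div_self (by positivity), mul_one]
  refine ⟨t, c * t, ht, mul_pos hc ht, ?_, hsecond⟩
  calc -k * (c * t) ^ 3 / (1 + t ^ 2 + (c * t) ^ 2)
      = -c ^ 3 * (k * t ^ 3 / (1 + t ^ 2 + (c * t) ^ 2)) := by ring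
    _ = a := by rw [hsecond, hc3]; field_simp

theorem szlenk_maps_first_quadrant_onto_second_general (k : ℝ) (hk1 : 1 < k)
    (F : ℝ × ℝ → ℝ × ℝ)
    (hF : ∀ p : ℝ × ℝ,
      F p = (-k * p.2 ^ 3 / (1 + p.1 ^ 2 + p.2 ^ 2),
              k * p.1 ^ 3 / (1 + p.1 ^ 2 + p.2 ^ 2))) :
    Set.MapsTo F {p : ℝ × ℝ | 0 < p.1 ∧ 0 < p.2} {p : ℝ × ℝ | p.1 < 0 ∧ 0 < p.2} ∧
    F '' {p : ℝ × ℝ | 0 < p.1 ∧ 0 < p.2} = {p : ℝ × ℝ | p.1 < 0 ∧ 0 < p.2} := by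
  have hk : 0 < k := zero_lt_one.trans hk1
  have hmaps : MapsTo F {p : ℝ × ℝ | 0 < p.1 ∧ 0 < p.2} {p : ℝ × ℝ | p.1 < 0 ∧ 0 < p.2} := by
    rintro ⟨x, y⟩ ⟨hx, hy⟩
    rw [hF]
    refine ⟨div_neg_of_neg_of_pos ?_ (by positivity), by positivity⟩
    rw [neg_mul]
    exact neg_neg_of_pos (by positivity)
  refine ⟨hmaps, hmaps.image_subset.antisymm ?_⟩
  rintro ⟨a, b⟩ ⟨ha, hb⟩
  obtain ⟨x, y, hx, hy, hfirst, hsecond⟩ := exists_first_quadrant_preimage hk ha hb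
  exact ⟨(x, y), ⟨hx, hy⟩, by rw [hF, hfirst, hsecond]⟩

/-- `F₄` maps the open first quadrant into the open second quadrant, and in
fact onto it. -/
theorem szlenk_maps_first_quadrant_onto_second (k : ℝ) (hk1 : 1 < k)
    (hk2 : k < 2 / Real.sqrt 3)
    (F : ℝ × ℝ → ℝ × ℝ)
    (hF : ∀ p : ℝ × ℝ,
      F p = (-k * p.2 ^ 3 / (1 + p.1 ^ 2 + p.2 ^ 2),
              k * p.1 ^ 3 / (1 + p.1 ^ 2 + p.2 ^ 2))) :
    Set.MapsTo F {p : ℝ × ℝ | 0 < p.1 ∧ 0 < p.2} {p : ℝ × ℝ | p.1 < 0 ∧ 0 < p.2} ∧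
    F '' {p : ℝ × ℝ | 0 < p.1 ∧ 0 < p.2} = {p : ℝ × ℝ | p.1 < 0 ∧ 0 < p.2} :=
  szlenk_maps_first_quadrant_onto_second_general k hk1 F hF
end

section
/- For the astroid curve γ(θ) = (k/2)(-sin³θ, cos³θ), the determinant of the 2×2 matrix with rows γ(θ) and γ'(θ) equals (3k²/4) sin²θ cos²θ; in particular it is strictly positive for θ ∈ (0, π/2), so the astroid arc is transverse to each line ray through the origin at those points. -/
open Real

lemma linearIndependent_pair_of_det_ne_zero {K : Type*} [Field K] {v w : K × K}
    (h : v.1 * w.2 - v.2 * w.1 ≠ 0) : LinearIndependent K ![v, w] := by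
  rw [LinearIndependent.pair_iff]
  intro s t hst
  have h₁ : s * v.1 + t * w.1 = 0 := congrArg Prod.fst hst
  have h₂ : s * v.2 + t * w.2 = 0 := congrArg Prod.snd hst
  have hs : s * (v.1 * w.2 - v.2 * w.1) = 0 := by linear_combination w.2 * h₁ - w.1 * h₂
  have ht : t * (v.1 * w.2 - v.2 * w.1) = 0 := by linear_combination v.1 * h₂ - v.2 * h₁
  exact ⟨(mul_eq_zero.mp hs).resolve_right h, (mul_eq_zero.mp ht).resolve_right h⟩

lemma deriv_const_mul_neg_sin_pow_three (a θ : ℝ) :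
    deriv (fun t => a * (-(sin t) ^ 3)) θ = -(3 * a) * sin θ ^ 2 * cos θ :=
  (((hasDerivAt_sin θ).pow 3).neg.const_mul a).deriv.trans (by ring)

lemma deriv_const_mul_cos_pow_three (a θ : ℝ) :
    deriv (fun t => a * (cos t) ^ 3) θ = -(3 * a) * cos θ ^ 2 * sin θ :=
  (((hasDerivAt_cos θ).pow 3).const_mul a).deriv.trans (by ring)

/-- For the astroid `γ(θ) = (k/2)(-sin³θ, cos³θ)`, the determinant of the matrix
with rows `γ(θ)` and `γ'(θ)` equals `(3k²/4) sin²θ cos²θ`; it is positive on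
`(0, π/2)`, where `γ(θ)` and `γ'(θ)` are linearly independent. -/
theorem astroid_transverse_to_rays (k : ℝ) (hk : 0 < k)
    (γ : ℝ → ℝ × ℝ)
    (hγ : ∀ θ : ℝ, γ θ = (k / 2 * (-(sin θ) ^ 3), k / 2 * (cos θ) ^ 3))
    (γ' : ℝ → ℝ × ℝ)
    (hγ' : ∀ θ : ℝ, γ' θ = (deriv (fun t => k / 2 * (-(sin t) ^ 3)) θ,
                             deriv (fun t => k / 2 * (cos t) ^ 3) θ)) :
    (∀ θ : ℝ, (γ θ).1 * (γ' θ).2 - (γ θ).2 * (γ' θ).1 =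
      3 * k ^ 2 / 4 * (sin θ) ^ 2 * (cos θ) ^ 2) ∧
    (∀ θ ∈ Set.Ioo 0 (π / 2),
      0 < (γ θ).1 * (γ' θ).2 - (γ θ).2 * (γ' θ).1 ∧
      LinearIndependent ℝ ![γ θ, γ' θ]) := by
  have hdet : ∀ θ : ℝ, (γ θ).1 * (γ' θ).2 - (γ θ).2 * (γ' θ).1 =
      3 * k ^ 2 / 4 * (sin θ) ^ 2 * (cos θ) ^ 2 := by
    intro θ
    rw [hγ, hγ', deriv_const_mul_neg_sin_pow_three, deriv_const_mul_cos_pow_three]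
    linear_combination (3 * k ^ 2 / 4 * sin θ ^ 2 * cos θ ^ 2) * sin_sq_add_cos_sq θ
  refine ⟨hdet, fun θ hθ => ?_⟩
  have hsin : 0 < sin θ := sin_pos_of_pos_of_lt_pi hθ.1 (by linarith [hθ.2, pi_pos])
  have hcos : 0 < cos θ := cos_pos_of_mem_Ioo ⟨by linarith [hθ.1, pi_pos], hθ.2⟩
  have hpos : 0 < (γ θ).1 * (γ' θ).2 - (γ θ).2 * (γ' θ).1 := by
    rw [hdet]
    positivity
  exact ⟨hpos, linearIndependent_pair_of_det_ne_zero hpos.ne'⟩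
end

section
/- Let g(x,y) = F₄(x,y) + β(-y, x) with β > 0. Then |g(x,y)| → ∞ as |(x,y)| → ∞; more precisely, in polar coordinates, |g(r,θ)|² ≥ k r²/16 + β² r² + β k r²/2 for all r > 1. -/
/-!
Writing `ρ = x² + y²`, the squared norm of `g(x, y)` expands as
`(k/(1+ρ))² (x⁶ + y⁶) + 2βk/(1+ρ) (x⁴ + y⁴) + β² ρ` with all three terms nonnegative, so
`|g(x, y)| ≥ β |(x, y)|`, which gives properness. For the quantitative bound, the power-mean
inequalities `x⁴ + y⁴ ≥ ρ²/2` and `x⁶ + y⁶ ≥ ρ³/4` reduce everything to `ρ ≥ 1` and `k ≥ 1`.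
-/

open Real Filter

noncomputable def perturbedSzlenk (k β : ℝ) (p : ℝ × ℝ) : ℝ × ℝ :=
  (-k * p.2 ^ 3 / (1 + p.1 ^ 2 + p.2 ^ 2) + β * (-p.2),
    k * p.1 ^ 3 / (1 + p.1 ^ 2 + p.2 ^ 2) + β * p.1)

lemma sq_add_sq_sq_div_two_le (x y : ℝ) : (x ^ 2 + y ^ 2) ^ 2 / 2 ≤ x ^ 4 + y ^ 4 := by
  nlinarith [sq_nonneg (x ^ 2 - y ^ 2)]

lemma sq_add_sq_pow_three_div_four_le (x y : ℝ) :
    (x ^ 2 + y ^ 2) ^ 3 / 4 ≤ x ^ 6 + y ^ 6 := by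
  -- `4 (a³ + b³) - (a + b)³ = 3 (a + b) (a - b)²` with `a = x²`, `b = y²`
  nlinarith [mul_nonneg (add_nonneg (sq_nonneg x) (sq_nonneg y)) (sq_nonneg (x ^ 2 - y ^ 2))]

lemma perturbedSzlenk_normSq (k β : ℝ) (p : ℝ × ℝ) :
    (perturbedSzlenk k β p).1 ^ 2 + (perturbedSzlenk k β p).2 ^ 2 =
      (k / (1 + p.1 ^ 2 + p.2 ^ 2)) ^ 2 * (p.1 ^ 6 + p.2 ^ 6) +
        2 * β * (k / (1 + p.1 ^ 2 + p.2 ^ 2)) * (p.1 ^ 4 + p.2 ^ 4) +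
          β ^ 2 * (p.1 ^ 2 + p.2 ^ 2) := by
  simp only [perturbedSzlenk]
  ring

section perturbedSzlenk

variable {k β : ℝ}

lemma sq_mul_sq_add_sq_le_perturbedSzlenk_normSq (hk : 0 ≤ k) (hβ : 0 ≤ β) (p : ℝ × ℝ) :
    β ^ 2 * (p.1 ^ 2 + p.2 ^ 2) ≤
      (perturbedSzlenk k β p).1 ^ 2 + (perturbedSzlenk k β p).2 ^ 2 := by
  rw [perturbedSzlenk_normSq]
  have : 0 ≤ (k / (1 + p.1 ^ 2 + p.2 ^ 2)) ^ 2 * (p.1 ^ 6 + p.2 ^ 6) := by positivity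
  have : 0 ≤ 2 * β * (k / (1 + p.1 ^ 2 + p.2 ^ 2)) * (p.1 ^ 4 + p.2 ^ 4) := by positivity
  linarith

lemma mul_norm_le_sqrt_perturbedSzlenk_normSq (hk : 0 ≤ k) (hβ : 0 ≤ β) (p : ℝ × ℝ) :
    β * ‖p‖ ≤ √((perturbedSzlenk k β p).1 ^ 2 + (perturbedSzlenk k β p).2 ^ 2) := by
  have hnorm : ‖p‖ ≤ √(p.1 ^ 2 + p.2 ^ 2) := by
    rw [Prod.norm_def, Real.norm_eq_abs, Real.norm_eq_abs]
    exact max_le (abs_le_sqrt (le_add_of_nonneg_right (sq_nonneg _)))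
      (abs_le_sqrt (le_add_of_nonneg_left (sq_nonneg _)))
  calc β * ‖p‖ ≤ β * √(p.1 ^ 2 + p.2 ^ 2) := mul_le_mul_of_nonneg_left hnorm hβ
    _ = √(β ^ 2 * (p.1 ^ 2 + p.2 ^ 2)) := by rw [sqrt_mul (sq_nonneg β), sqrt_sq hβ]
    _ ≤ _ := sqrt_le_sqrt (sq_mul_sq_add_sq_le_perturbedSzlenk_normSq hk hβ p)

lemma tendsto_sqrt_perturbedSzlenk_normSq_cocompact (hk : 0 ≤ k) (hβ : 0 < β) :
    Tendsto (fun p => √((perturbedSzlenk k β p).1 ^ 2 + (perturbedSzlenk k β p).2 ^ 2))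
      (cocompact (ℝ × ℝ)) atTop :=
  tendsto_atTop_mono (mul_norm_le_sqrt_perturbedSzlenk_normSq hk hβ.le)
    (tendsto_norm_cocompact_atTop.const_mul_atTop hβ)

lemma perturbedSzlenk_normSq_ge (hk : 1 ≤ k) (hβ : 0 ≤ β) {p : ℝ × ℝ} {ρ : ℝ}
    (hpρ : p.1 ^ 2 + p.2 ^ 2 = ρ) (hρ : 1 ≤ ρ) :
    k * ρ / 16 + β ^ 2 * ρ + β * k * ρ / 2 ≤
      (perturbedSzlenk k β p).1 ^ 2 + (perturbedSzlenk k β p).2 ^ 2 := by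
  rw [perturbedSzlenk_normSq, add_assoc 1, hpρ]
  have hD : 0 < 1 + ρ := by linarith
  have hsextic : k * ρ / 16 ≤ (k / (1 + ρ)) ^ 2 * (p.1 ^ 6 + p.2 ^ 6) := by
    have hfac : (1 + ρ) ^ 2 ≤ 4 * k * ρ ^ 2 := by nlinarith
    calc k * ρ / 16 ≤ (k / (1 + ρ)) ^ 2 * (ρ ^ 3 / 4) := by
          rw [div_pow, div_mul_div_comm, le_div_iff₀ (by positivity)]
          nlinarith [mul_le_mul_of_nonneg_left hfac (by positivity : 0 ≤ k * ρ)]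
      _ ≤ _ := by gcongr; simpa only [hpρ] using sq_add_sq_pow_three_div_four_le p.1 p.2
  have hquartic : β * k * ρ / 2 ≤ 2 * β * (k / (1 + ρ)) * (p.1 ^ 4 + p.2 ^ 4) := by
    calc β * k * ρ / 2 ≤ 2 * β * (k / (1 + ρ)) * (ρ ^ 2 / 2) := by
          rw [show 2 * β * (k / (1 + ρ)) * (ρ ^ 2 / 2) = β * k * ρ ^ 2 / (1 + ρ) by ring,
            le_div_iff₀ hD]
          nlinarith [mul_nonneg (mul_nonneg hβ (by linarith : (0 : ℝ) ≤ k))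
            (mul_nonneg (by positivity : (0 : ℝ) ≤ ρ) (by linarith : 0 ≤ ρ - 1))]
      _ ≤ _ := by gcongr; simpa only [hpρ] using sq_add_sq_sq_div_two_le p.1 p.2
  linarith

end perturbedSzlenk

theorem szlenk_perturbed_proper_general (k β : ℝ) (hk1 : 1 < k)
    (hβ : 0 < β)
    (F : ℝ × ℝ → ℝ × ℝ)
    (hF : ∀ p : ℝ × ℝ,
      F p = (-k * p.2 ^ 3 / (1 + p.1 ^ 2 + p.2 ^ 2),
              k * p.1 ^ 3 / (1 + p.1 ^ 2 + p.2 ^ 2)))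
    (g : ℝ × ℝ → ℝ × ℝ)
    (hg : ∀ p : ℝ × ℝ, g p = ((F p).1 + β * (-p.2), (F p).2 + β * p.1)) :
    Tendsto (fun p : ℝ × ℝ => Real.sqrt ((g p).1 ^ 2 + (g p).2 ^ 2))
      (Filter.cocompact (ℝ × ℝ)) Filter.atTop ∧
    (∀ r θ : ℝ, 1 < r →
      k * r ^ 2 / 16 + β ^ 2 * r ^ 2 + β * k * r ^ 2 / 2 ≤
        (g (r * cos θ, r * sin θ)).1 ^ 2 + (g (r * cos θ, r * sin θ)).2 ^ 2) := by
  obtain rfl : g = perturbedSzlenk k β := funext fun p => by simp only [hg, hF, perturbedSzlenk]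
  refine ⟨tendsto_sqrt_perturbedSzlenk_normSq_cocompact (by linarith) hβ, fun r θ hr => ?_⟩
  have hpolar : (r * cos θ) ^ 2 + (r * sin θ) ^ 2 = r ^ 2 := by
    rw [mul_pow, mul_pow, ← mul_add, cos_sq_add_sin_sq, mul_one]
  exact perturbedSzlenk_normSq_ge hk1.le hβ.le hpolar (one_le_pow₀ hr.le)

/-- For `g = F₄ + β·(-y,x)` with `β > 0`, `|g(x,y)| → ∞` as `|(x,y)| → ∞`;
more precisely, in polar coordinates,
`|g(r,θ)|² ≥ k r²/16 + β² r² + β k r²/2` for all `r > 1`. -/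
theorem szlenk_perturbed_proper (k β : ℝ) (hk1 : 1 < k)
    (hk2 : k < 2 / Real.sqrt 3) (hβ : 0 < β)
    (F : ℝ × ℝ → ℝ × ℝ)
    (hF : ∀ p : ℝ × ℝ,
      F p = (-k * p.2 ^ 3 / (1 + p.1 ^ 2 + p.2 ^ 2),
              k * p.1 ^ 3 / (1 + p.1 ^ 2 + p.2 ^ 2)))
    (g : ℝ × ℝ → ℝ × ℝ)
    (hg : ∀ p : ℝ × ℝ, g p = ((F p).1 + β * (-p.2), (F p).2 + β * p.1)) :
    Tendsto (fun p : ℝ × ℝ => Real.sqrt ((g p).1 ^ 2 + (g p).2 ^ 2))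
      (Filter.cocompact (ℝ × ℝ)) Filter.atTop ∧
    (∀ r θ : ℝ, 1 < r →
      k * r ^ 2 / 16 + β ^ 2 * r ^ 2 + β * k * r ^ 2 / 2 ≤
        (g (r * cos θ, r * sin θ)).1 ^ 2 + (g (r * cos θ, r * sin θ)).2 ^ 2) :=
  szlenk_perturbed_proper_general k β hk1 hβ F hF g hg
end
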